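/- arXiv:1604.08175 — 7 statements merged into one kernel-verified Lean document; each statement's English description precedes it below -/
import Mathlib

section
/- Conversely, if x : ℝ → ℝ is a continuously differentiable ω-periodic solution of x'(t) = -a(t)x(t) + λ b(t) f(x(t-τ(t))), then x(t) = λ ∫_t^{t+ω} G(t,s) b(s) f(x(s-τ(s))) ds for all t, where G(t,s) = exp(∫_t^s a)/(exp(āω)-1). -/
/-!
Multiplying by the integrating factor `exp (∫ θ in t..s, a θ)` turns the equation into
`d/ds (exp (∫ θ in t..s, a θ) * x s) = exp (∫ θ in t..s, a θ) * λ b(s) f(x(s - τ(s)))`.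
Integrating over one period and using the periodicity of `x` and `a`, the left side becomes
`(exp (ā ω) - 1) * x t`, and `exp (ā ω) ≠ 1` because `ā > 0`.
-/

open Real intervalIntegral

section VariationOfConstants

variable {a x : ℝ → ℝ}

theorem hasDerivAt_exp_integral_mul (ha : Continuous a) (hx : Differentiable ℝ x) (t s : ℝ) :
    HasDerivAt (fun u => exp (∫ θ in t..u, a θ) * x u)
      (exp (∫ θ in t..s, a θ) * (deriv x s + a s * x s)) s := by
  have hexp := (ha.integral_hasStrictDerivAt t s).hasDerivAt.exp
  exact (hexp.mul (hx s).hasDerivAt).congr_deriv (by ring)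

theorem integral_exp_integral_mul_deriv_add (ha : Continuous a) (hx : ContDiff ℝ 1 x)
    (t T : ℝ) :
    ∫ s in t..T, exp (∫ θ in t..s, a θ) * (deriv x s + a s * x s)
      = exp (∫ θ in t..T, a θ) * x T - x t := by
  have hprimitive : Continuous fun s => ∫ θ in t..s, a θ :=
    continuous_primitive (fun _ _ => ha.intervalIntegrable _ _) t
  have hcont : Continuous fun s => exp (∫ θ in t..s, a θ) * (deriv x s + a s * x s) :=
    hprimitive.rexp.mul ((hx.continuous_deriv le_rfl).add (ha.mul hx.continuous))
  rw [integral_eq_sub_of_hasDerivAt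
    (fun s _ => hasDerivAt_exp_integral_mul ha (hx.differentiable one_ne_zero) t s)
    (hcont.intervalIntegrable _ _)]
  simp

theorem Function.Periodic.eq_integral_exp_integral_mul_deriv_add {ω : ℝ}
    (ha : Continuous a) (haper : Function.Periodic a ω) (hx : ContDiff ℝ 1 x)
    (hxper : Function.Periodic x ω) (hmean : exp (∫ θ in (0 : ℝ)..ω, a θ) ≠ 1) (t : ℝ) :
    x t = (∫ s in t..t + ω, exp (∫ θ in t..s, a θ) * (deriv x s + a s * x s))
      / (exp (∫ θ in (0 : ℝ)..ω, a θ) - 1) := by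
  have hperiod : ∫ θ in t..t + ω, a θ = ∫ θ in (0 : ℝ)..ω, a θ := by
    simpa using haper.intervalIntegral_add_eq t 0
  rw [integral_exp_integral_mul_deriv_add ha hx, hperiod, hxper t,
    eq_div_iff (sub_ne_zero.mpr hmean)]
  ring

end VariationOfConstants

theorem stmt_5_general (a b τ f x : ℝ → ℝ) (ω abar lam : ℝ) (G : ℝ → ℝ → ℝ)
    (hω : 0 < ω) (ha : Continuous a) (haper : Function.Periodic a ω)
    (habar : abar = (1 / ω) * ∫ s in (0:ℝ)..ω, a s) (habar_pos : 0 < abar)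
    (hG : ∀ t s, G t s = Real.exp (∫ θ in t..s, a θ) / (Real.exp (abar * ω) - 1))
    (hx : ContDiff ℝ 1 x) (hxper : Function.Periodic x ω)
    (hode : ∀ t, deriv x t = -a t * x t + lam * (b t * f (x (t - τ t)))) :
    ∀ t, x t = lam * ∫ s in t..t + ω, G t s * (b s * f (x (s - τ s))) := by
  intro t
  have hmean : abar * ω = ∫ θ in (0 : ℝ)..ω, a θ := by
    rw [habar]
    field_simp
  have hexp : exp (∫ θ in (0 : ℝ)..ω, a θ) ≠ 1 := by
    rw [← hmean]
    exact (one_lt_exp_iff.mpr (by positivity)).ne'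
  rw [haper.eq_integral_exp_integral_mul_deriv_add ha hx hxper hexp t, ← hmean,
    ← integral_const_mul, ← integral_div]
  refine integral_congr fun s _ => ?_
  simp only [hG, hode]
  ring

/-- A periodic solution of the delay differential equation is a fixed point of the
integral operator. -/
theorem stmt_5 (a b τ f x : ℝ → ℝ) (ω abar lam : ℝ) (G : ℝ → ℝ → ℝ)
    (hω : 0 < ω) (ha : Continuous a) (haper : Function.Periodic a ω)
    (hb : Continuous b) (hbper : Function.Periodic b ω)
    (hf : Continuous f) (hτ : Continuous τ) (hτper : Function.Periodic τ ω)
    (habar : abar = (1 / ω) * ∫ s in (0:ℝ)..ω, a s) (habar_pos : 0 < abar)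
    (hlam : 0 < lam)
    (hG : ∀ t s, G t s = Real.exp (∫ θ in t..s, a θ) / (Real.exp (abar * ω) - 1))
    (hx : ContDiff ℝ 1 x) (hxper : Function.Periodic x ω)
    (hode : ∀ t, deriv x t = -a t * x t + lam * (b t * f (x (t - τ t)))) :
    ∀ t, x t = lam * ∫ s in t..t + ω, G t s * (b s * f (x (s - τ s))) :=
  stmt_5_general a b τ f x ω abar lam G hω ha haper habar habar_pos hG hx hxper hode
end

section
/- Let a, b : ℝ → ℝ be continuous nonnegative ω-periodic with ā > 0 and b̄ > 0, σ = exp(-āω), G as above, and λ > 0. Suppose f : [0,∞) → [0,∞) is continuous and there exists c₂ > 0 with f(u) ≤ c₂ u for all u ≥ 0. If 0 < λ < (σ⁻¹-1)/(σ⁻¹ c₂ b̄ ω), then the equation x'(t) = -a(t)x(t) + λ b(t) f(x(t-τ(t))) has no positive ω-periodic solution (i.e., no ω-periodic C¹ solution x with x(t) > 0 for all t). -/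
open Real Set Function intervalIntegral

/-!
Multiply the equation by the integrating factor `exp (∫ a)` and integrate over one period
starting at a point `t₀` where `x` attains its maximum `M`. Periodicity makes the left side
`M (σ⁻¹ - 1)`, while the sublinear bound gives `f (x (t - τ t)) ≤ c₂ M`, so the right side is at
most `λ c₂ M σ⁻¹ b̄ ω`. Dividing by `M > 0` contradicts the smallness of `λ`.
-/

theorem sub_le_sub_of_hasDerivAt_le {f g f' g' : ℝ → ℝ} {s t : ℝ} (hst : s ≤ t)
    (hf : ∀ x, HasDerivAt f (f' x) x) (hg : ∀ x, HasDerivAt g (g' x) x)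
    (hle : ∀ x ∈ Icc s t, f' x ≤ g' x) : f t - f s ≤ g t - g s := by
  have hmono : MonotoneOn (fun x => g x - f x) (Icc s t) :=
    monotoneOn_of_hasDerivWithinAt_nonneg (convex_Icc s t)
      (fun x _ => ((hg x).sub (hf x)).continuousAt.continuousWithinAt)
      (fun x _ => ((hg x).sub (hf x)).hasDerivWithinAt)
      (fun x hx => sub_nonneg.2 (hle x (interior_subset hx)))
  linarith [hmono (left_mem_Icc.2 hst) (right_mem_Icc.2 hst) hst]

theorem hasDerivAt_mul_exp_integral {x a : ℝ → ℝ} (ha : Continuous a) (t₀ : ℝ) {t : ℝ}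
    (hx : DifferentiableAt ℝ x t) :
    HasDerivAt (fun u => x u * exp (∫ s in t₀..u, a s))
      ((deriv x t + a t * x t) * exp (∫ s in t₀..t, a s)) t := by
  have hA := (ha.integral_hasStrictDerivAt t₀ t).hasDerivAt.exp
  exact (hx.hasDerivAt.mul hA).congr_deriv (by ring)

theorem Function.Periodic.mul_exp_integral_sub_one_le {a b x : ℝ → ℝ} {ω K : ℝ}
    (hxper : Periodic x ω) (hx : Differentiable ℝ x) (hω : 0 ≤ ω)
    (ha : Continuous a) (hann : ∀ t, 0 ≤ a t) (haper : Periodic a ω)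
    (hb : Continuous b) (hbnn : ∀ t, 0 ≤ b t) (hbper : Periodic b ω) (hK : 0 ≤ K)
    (hineq : ∀ t, deriv x t + a t * x t ≤ K * b t) (t₀ : ℝ) :
    x t₀ * (exp (∫ s in 0..ω, a s) - 1) ≤ K * exp (∫ s in 0..ω, a s) * ∫ s in 0..ω, b s := by
  set A : ℝ → ℝ := fun u => ∫ s in t₀..u, a s
  have hAmono : Monotone A :=
    monotone_of_hasDerivAt_nonneg (fun t => (ha.integral_hasStrictDerivAt t₀ t).hasDerivAt) hann
  have hcomp := sub_le_sub_of_hasDerivAt_le (le_add_of_nonneg_right hω)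
    (fun t => hasDerivAt_mul_exp_integral ha t₀ (hx t))
    (fun t => ((hb.integral_hasStrictDerivAt t₀ t).hasDerivAt.const_mul
      (K * exp (A (t₀ + ω)))))
    (fun t ht => calc
      (deriv x t + a t * x t) * exp (A t) ≤ K * b t * exp (A t) :=
        mul_le_mul_of_nonneg_right (hineq t) (exp_pos _).le
      _ ≤ K * b t * exp (A (t₀ + ω)) :=
        mul_le_mul_of_nonneg_left (exp_le_exp.2 (hAmono ht.2)) (mul_nonneg hK (hbnn t))
      _ = K * exp (A (t₀ + ω)) * b t := by ring)
  simp only [A, integral_same, exp_zero, mul_one, mul_zero, sub_zero, hxper t₀] at hcomp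
  rw [haper.intervalIntegral_add_eq t₀ 0, hbper.intervalIntegral_add_eq t₀ 0, zero_add] at hcomp
  linarith

theorem stmt_6_general (a b τ f : ℝ → ℝ) (ω abar bbar σ c₂ lam : ℝ)
    (hω : 0 < ω)
    (ha : Continuous a) (hann : ∀ t, 0 ≤ a t) (haper : Function.Periodic a ω)
    (hb : Continuous b) (hbnn : ∀ t, 0 ≤ b t) (hbper : Function.Periodic b ω)
    (habar : abar = (1 / ω) * ∫ s in (0:ℝ)..ω, a s)
    (hbbar : bbar = (1 / ω) * ∫ s in (0:ℝ)..ω, b s) (hbbar_pos : 0 < bbar)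
    (hσ : σ = Real.exp (-abar * ω))
    (hc₂ : 0 < c₂) (hfle : ∀ u ≥ (0:ℝ), f u ≤ c₂ * u)
    (hlam : 0 < lam) (hlam' : lam < (σ⁻¹ - 1) / (σ⁻¹ * c₂ * bbar * ω)) :
    ¬ ∃ x : ℝ → ℝ, ContDiff ℝ 1 x ∧ Function.Periodic x ω ∧ (∀ t, 0 < x t) ∧
      ∀ t, deriv x t = -a t * x t + lam * (b t * f (x (t - τ t))) := by
  rintro ⟨x, hxC1, hxper, hxpos, hode⟩
  obtain ⟨_, ⟨t₀, rfl⟩, hmax⟩ := (hxper.compact_of_continuous hω.ne'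
    hxC1.continuous).exists_isGreatest (range_nonempty x)
  have hineq (t : ℝ) : deriv x t + a t * x t ≤ lam * c₂ * x t₀ * b t := by
    have hfx : f (x (t - τ t)) ≤ c₂ * x t₀ := (hfle _ (hxpos _).le).trans
      (mul_le_mul_of_nonneg_left (hmax ⟨_, rfl⟩) hc₂.le)
    rw [hode]
    linarith [mul_le_mul_of_nonneg_left hfx (mul_nonneg hlam.le (hbnn t))]
  have key := hxper.mul_exp_integral_sub_one_le (hxC1.differentiable one_ne_zero) hω.le
    ha hann haper hb hbnn hbper (by have := hxpos t₀; positivity) hineq t₀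
  have hIa : ∫ s in (0:ℝ)..ω, a s = abar * ω := by rw [habar]; field_simp
  have hIb : ∫ s in (0:ℝ)..ω, b s = bbar * ω := by rw [hbbar]; field_simp
  have hσinv : σ⁻¹ = exp (abar * ω) := by rw [hσ, ← exp_neg, neg_mul, neg_neg]
  rw [hIa, hIb] at key
  rw [hσinv, lt_div_iff₀ (by positivity)] at hlam'
  nlinarith [mul_lt_mul_of_pos_left hlam' (hxpos t₀)]

/-- Nonexistence of positive periodic solutions for small λ when f is sublinear. -/
theorem stmt_6 (a b τ f : ℝ → ℝ) (ω abar bbar σ c₂ lam : ℝ)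
    (hω : 0 < ω)
    (ha : Continuous a) (hann : ∀ t, 0 ≤ a t) (haper : Function.Periodic a ω)
    (hb : Continuous b) (hbnn : ∀ t, 0 ≤ b t) (hbper : Function.Periodic b ω)
    (hτ : Continuous τ) (hτper : Function.Periodic τ ω)
    (habar : abar = (1 / ω) * ∫ s in (0:ℝ)..ω, a s) (habar_pos : 0 < abar)
    (hbbar : bbar = (1 / ω) * ∫ s in (0:ℝ)..ω, b s) (hbbar_pos : 0 < bbar)
    (hσ : σ = Real.exp (-abar * ω))
    (hf : ContinuousOn f (Set.Ici 0)) (hfnn : ∀ u ≥ (0:ℝ), 0 ≤ f u)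
    (hc₂ : 0 < c₂) (hfle : ∀ u ≥ (0:ℝ), f u ≤ c₂ * u)
    (hlam : 0 < lam) (hlam' : lam < (σ⁻¹ - 1) / (σ⁻¹ * c₂ * bbar * ω)) :
    ¬ ∃ x : ℝ → ℝ, ContDiff ℝ 1 x ∧ Function.Periodic x ω ∧ (∀ t, 0 < x t) ∧
      ∀ t, deriv x t = -a t * x t + lam * (b t * f (x (t - τ t))) :=
  stmt_6_general a b τ f ω abar bbar σ c₂ lam hω ha hann haper hb hbnn hbper habar hbbar hbbar_pos
    hσ hc₂ hfle hlam hlam'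
end

section
/- Let a : [0,∞) → ℝ and b : [0,∞) → ℝ be continuous, and suppose: (i) ∫₀^t a(s) ds → +∞ as t → +∞; (ii) there exist K_L > 0 and α ∈ (0,1) such that K_L ∫₀^t exp(-∫_s^t a(u)du) |b(s)| ds ≤ α for all t ≥ 0. Let x : [0,∞) → ℝ be continuous with |x(t)| ≤ L for all t and x(t) → 0 as t → ∞. Then ∫₀^t exp(-∫_s^t a(u)du) b(s) F(x(s)) ds → 0 as t → ∞, for any continuous F : ℝ → ℝ with F(0) = 0 and |F(u)-F(v)| ≤ K_L |u-v| for |u|,|v| ≤ L. -/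
/-! Writing `A t = ∫₀ᵗ a`, the kernel is `exp (A s - A t)`, so for `T ≤ t` the integral over
`[0, t]` is `exp (A T - A t)` times the integral over `[0, T]`, plus the integral over `[T, t]`.
The first term tends to `0` by (H3) for fixed `T`. On `[T, t]` the Lipschitz bound gives
`|b F(x)| ≤ |x| K_L |b|`, so by (H5) the second term is at most `α sup_{s ≥ T} |x s|`, which is
small once `T` is large. -/

open Real Filter Set Topology intervalIntegral

theorem intervalIntegrable_of_continuousOn_Ici {f : ℝ → ℝ} (hf : ContinuousOn f (Ici 0))
    {s t : ℝ} (hs : 0 ≤ s) (ht : 0 ≤ t) : IntervalIntegrable f MeasureTheory.volume s t :=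
  (hf.mono fun _ hu => (le_inf hs ht).trans hu.1).intervalIntegrable

theorem ContinuousOn.continuousOn_primitive_Ici {a : ℝ → ℝ} (ha : ContinuousOn a (Ici 0)) :
    ContinuousOn (fun t => ∫ u in (0:ℝ)..t, a u) (Ici 0) := by
  intro x (hx : 0 ≤ x)
  have hprim := continuousOn_primitive_interval'
    (intervalIntegrable_of_continuousOn_Ici ha le_rfl (by linarith : (0:ℝ) ≤ x + 1))
    left_mem_uIcc
  rw [uIcc_of_le (by linarith)] at hprim
  refine (hprim x ⟨hx, by linarith⟩).mono_of_mem_nhdsWithin ?_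
  exact mem_nhdsWithin.mpr ⟨Iio (x + 1), isOpen_Iio, by simp, fun y hy => ⟨hy.2, hy.1.le⟩⟩

theorem integral_exp_neg_integral_mul_eq {a g : ℝ → ℝ} (ha : ContinuousOn a (Ici 0)) {t : ℝ}
    (ht : 0 ≤ t) :
    ∫ s in (0:ℝ)..t, exp (-∫ u in s..t, a u) * g s =
      ∫ s in (0:ℝ)..t, exp ((∫ u in (0:ℝ)..s, a u) - ∫ u in (0:ℝ)..t, a u) * g s := by
  refine integral_congr fun s hs => ?_
  rw [uIcc_of_le ht] at hs
  simp only [← integral_interval_sub_left (intervalIntegrable_of_continuousOn_Ici ha le_rfl ht)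
    (intervalIntegrable_of_continuousOn_Ici ha le_rfl hs.1), neg_sub]

section ExpKernel

variable {A h w : ℝ → ℝ}

theorem integral_exp_sub_mul_eq_add (hA : ContinuousOn A (Ici 0)) (hh : ContinuousOn h (Ici 0))
    {T t : ℝ} (hT : 0 ≤ T) (hTt : T ≤ t) :
    ∫ s in (0:ℝ)..t, exp (A s - A t) * h s =
      exp (A T - A t) * (∫ s in (0:ℝ)..T, exp (A s - A T) * h s) +
        ∫ s in T..t, exp (A s - A t) * h s := by
  have hcont : ContinuousOn (fun s => exp (A s - A t) * h s) (Ici 0) :=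
    (hA.sub continuousOn_const).rexp.mul hh
  rw [← integral_add_adjacent_intervals (intervalIntegrable_of_continuousOn_Ici hcont le_rfl hT)
    (intervalIntegrable_of_continuousOn_Ici hcont hT (hT.trans hTt)), ← integral_const_mul]
  congr 1
  refine integral_congr fun s _ => ?_
  rw [← mul_assoc, ← exp_add]
  ring_nf

theorem norm_integral_exp_sub_mul_le (hA : ContinuousOn A (Ici 0)) (hh : ContinuousOn h (Ici 0))
    (hw : ContinuousOn w (Ici 0)) (hw0 : ∀ s ≥ 0, 0 ≤ w s) {T t η : ℝ} (hT : 0 ≤ T)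
    (hTt : T ≤ t) (hη : 0 ≤ η) (hhw : ∀ s ∈ Icc T t, |h s| ≤ η * w s) :
    ‖∫ s in T..t, exp (A s - A t) * h s‖ ≤ η * ∫ s in (0:ℝ)..t, exp (A s - A t) * w s := by
  have hexp : ContinuousOn (fun s => exp (A s - A t)) (Ici 0) := (hA.sub continuousOn_const).rexp
  have hwcont : ContinuousOn (fun s => exp (A s - A t) * w s) (Ici 0) := hexp.mul hw
  have hwint := intervalIntegrable_of_continuousOn_Ici hwcont le_rfl (hT.trans hTt)
  calc ‖∫ s in T..t, exp (A s - A t) * h s‖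
      ≤ ∫ s in T..t, ‖exp (A s - A t) * h s‖ := norm_integral_le_integral_norm hTt
    _ ≤ ∫ s in T..t, η * (exp (A s - A t) * w s) := by
        refine integral_mono_on hTt
          (intervalIntegrable_of_continuousOn_Ici (hexp.mul hh).norm hT (hT.trans hTt))
          ((intervalIntegrable_of_continuousOn_Ici hwcont hT (hT.trans hTt)).const_mul η)
          fun s hs => ?_
        rw [norm_mul, norm_of_nonneg (exp_pos _).le, mul_left_comm]
        exact mul_le_mul_of_nonneg_left (hhw s hs) (exp_pos _).le
    _ = η * ∫ s in T..t, exp (A s - A t) * w s := integral_const_mul _ _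
    _ ≤ η * ∫ s in (0:ℝ)..t, exp (A s - A t) * w s := by
        refine mul_le_mul_of_nonneg_left (integral_mono_interval hT hTt le_rfl ?_ hwint) hη
        filter_upwards [MeasureTheory.ae_restrict_mem measurableSet_Ioc] with s hs
        exact mul_nonneg (exp_pos _).le (hw0 s hs.1.le)

theorem tendsto_integral_exp_sub_mul_nhds_zero (hA : ContinuousOn A (Ici 0))
    (hAtop : Tendsto A atTop atTop) (hh : ContinuousOn h (Ici 0)) (hw : ContinuousOn w (Ici 0))
    (hw0 : ∀ s ≥ 0, 0 ≤ w s) {M : ℝ}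
    (hM : ∀ t ≥ 0, ∫ s in (0:ℝ)..t, exp (A s - A t) * w s ≤ M) {f : ℝ → ℝ}
    (hf : Tendsto f atTop (𝓝 0)) (hhw : ∀ s ≥ 0, |h s| ≤ |f s| * w s) :
    Tendsto (fun t => ∫ s in (0:ℝ)..t, exp (A s - A t) * h s) atTop (𝓝 0) := by
  have hM0 : 0 ≤ M := by simpa using hM 0 le_rfl
  rw [Metric.tendsto_nhds]
  intro ε hε
  set η := ε / (2 * (M + 1))
  have hη : 0 < η := by positivity
  have hηM : η * M ≤ ε / 2 := by
    have : η * (M + 1) = ε / 2 := by simp only [η]; field_simp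
    nlinarith
  obtain ⟨T₀, hT₀⟩ := eventually_atTop.mp (hf.eventually (Metric.ball_mem_nhds 0 hη))
  set T := max T₀ 0
  have hT : 0 ≤ T := le_max_right _ _
  have hAT : Tendsto (fun t => A T - A t) atTop atBot :=
    (tendsto_atBot_add_const_left _ (A T) (tendsto_neg_atTop_atBot.comp hAtop)).congr
      fun t => (sub_eq_add_neg _ _).symm
  have hhead : Tendsto (fun t => exp (A T - A t) * ∫ s in (0:ℝ)..T, exp (A s - A T) * h s)
      atTop (𝓝 0) := by
    simpa using (tendsto_exp_atBot.comp hAT).mul_const _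
  filter_upwards [hhead.eventually (Metric.ball_mem_nhds 0 (half_pos hε)),
    eventually_ge_atTop T] with t hhead_t hTt
  have htail := norm_integral_exp_sub_mul_le hA hh hw hw0 hT hTt hη.le fun s hs =>
    (hhw s (hT.trans hs.1)).trans <| mul_le_mul_of_nonneg_right
      (by simpa using (hT₀ s ((le_max_left _ _).trans hs.1)).le) (hw0 s (hT.trans hs.1))
  rw [dist_zero_right, integral_exp_sub_mul_eq_add hA hh hT hTt]
  calc _ ≤ _ := norm_add_le _ _
    _ < ε / 2 + η * M := add_lt_add_of_lt_of_le (by simpa using hhead_t)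
        (htail.trans (mul_le_mul_of_nonneg_left (hM t (hT.trans hTt)) hη.le))
    _ ≤ ε := by linarith

end ExpKernel

theorem stmt_9_general (a b x F : ℝ → ℝ) (L K_L α : ℝ)
    (ha : ContinuousOn a (Set.Ici 0)) (hb : ContinuousOn b (Set.Ici 0))
    (hL : 0 < L) (hKL : 0 < K_L)
    (hH3 : Filter.Tendsto (fun t => ∫ s in (0:ℝ)..t, a s) Filter.atTop Filter.atTop)
    (hH5 : ∀ t ≥ (0:ℝ),
      K_L * ∫ s in (0:ℝ)..t, Real.exp (-∫ u in s..t, a u) * |b s| ≤ α)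
    (hx : ContinuousOn x (Set.Ici 0)) (hxL : ∀ t ≥ (0:ℝ), |x t| ≤ L)
    (hx0 : Filter.Tendsto x Filter.atTop (nhds 0))
    (hF : Continuous F) (hF0 : F 0 = 0)
    (hFlip : ∀ u v : ℝ, |u| ≤ L → |v| ≤ L → |F u - F v| ≤ K_L * |u - v|) :
    Filter.Tendsto
      (fun t => ∫ s in (0:ℝ)..t, Real.exp (-∫ u in s..t, a u) * (b s * F (x s)))
      Filter.atTop (nhds 0) := by
  have hM : ∀ t ≥ (0:ℝ), ∫ s in (0:ℝ)..t,
      exp ((∫ u in (0:ℝ)..s, a u) - ∫ u in (0:ℝ)..t, a u) * (K_L * |b s|) ≤ α := fun t ht => by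
    simpa only [mul_left_comm _ K_L, integral_const_mul, integral_exp_neg_integral_mul_eq ha ht]
      using hH5 t ht
  have hFx : ∀ s ≥ (0:ℝ), |b s * F (x s)| ≤ |x s| * (K_L * |b s|) := fun s hs => by
    have hFs := hFlip (x s) 0 (hxL s hs) (by simpa using hL.le)
    rw [hF0, sub_zero, sub_zero] at hFs
    calc |b s * F (x s)| = |b s| * |F (x s)| := abs_mul _ _
      _ ≤ |b s| * (K_L * |x s|) := mul_le_mul_of_nonneg_left hFs (abs_nonneg _)
      _ = |x s| * (K_L * |b s|) := by ring
  refine (tendsto_integral_exp_sub_mul_nhds_zero ha.continuousOn_primitive_Ici hH3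
    (hb.mul (hF.comp_continuousOn hx)) (continuousOn_const.mul hb.abs)
    (fun s _ => mul_nonneg hKL.le (abs_nonneg _)) hM hx0 hFx).congr' ?_
  filter_upwards [eventually_ge_atTop 0] with t ht
  exact (integral_exp_neg_integral_mul_eq ha ht).symm

/-- Key convergence lemma in the stability proof. -/
theorem stmt_9 (a b x F : ℝ → ℝ) (L K_L α : ℝ)
    (ha : ContinuousOn a (Set.Ici 0)) (hb : ContinuousOn b (Set.Ici 0))
    (hL : 0 < L) (hKL : 0 < K_L) (hα0 : 0 < α) (hα1 : α < 1)
    (hH3 : Filter.Tendsto (fun t => ∫ s in (0:ℝ)..t, a s) Filter.atTop Filter.atTop)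
    (hH5 : ∀ t ≥ (0:ℝ),
      K_L * ∫ s in (0:ℝ)..t, Real.exp (-∫ u in s..t, a u) * |b s| ≤ α)
    (hx : ContinuousOn x (Set.Ici 0)) (hxL : ∀ t ≥ (0:ℝ), |x t| ≤ L)
    (hx0 : Filter.Tendsto x Filter.atTop (nhds 0))
    (hF : Continuous F) (hF0 : F 0 = 0)
    (hFlip : ∀ u v : ℝ, |u| ≤ L → |v| ≤ L → |F u - F v| ≤ K_L * |u - v|) :
    Filter.Tendsto
      (fun t => ∫ s in (0:ℝ)..t, Real.exp (-∫ u in s..t, a u) * (b s * F (x s)))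
      Filter.atTop (nhds 0) :=
  stmt_9_general a b x F L K_L α ha hb hL hKL hH3 hH5 hx hxL hx0 hF hF0 hFlip
end

section
/- Under hypotheses (H3)–(H5) for the scalar equation x'(t) = -a(t)x(t) + b(t) f(x(t)): let t₀ ≥ 0, K = sup_{t ≥ t₀} exp(-∫_{t₀}^t a), and choose δ ∈ (0,L) with δK + αL ≤ L. Define the operator P on S = {x ∈ C([t₀,∞),ℝ) : x(t₀) = φ₀, |x(t)| ≤ L, x(t) → 0} by (Px)(t) = exp(-∫_{t₀}^t a) φ₀ + ∫_{t₀}^t exp(-∫_s^t a) b(s) f(x(s)) ds. Then for x, y ∈ S, sup_{t ≥ t₀} |(Px)(t) - (Py)(t)| ≤ α · sup_{t ≥ t₀} |x(t) - y(t)|, i.e., P is a contraction with constant α. -/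
/-- The operator P is a contraction with constant α on S. -/
theorem stmt_10 (a b f : ℝ → ℝ) (t₀ L K_L α φ₀ δ KK : ℝ)
    (ha : Continuous a) (hb : Continuous b)
    (hL : 0 < L) (hKL : 0 < K_L)
    (hf0 : f 0 = 0)
    (hflip : ∀ u v : ℝ, |u| ≤ L → |v| ≤ L → |f u - f v| ≤ K_L * |u - v|)
    (hα0 : 0 < α) (hα1 : α < 1)
    (hαint : ∀ t ≥ t₀, K_L * ∫ s in t₀..t, Real.exp (-∫ u in s..t, a u) * |b s| ≤ α)
    (hKK : KK = sSup ((fun t => Real.exp (-∫ u in t₀..t, a u)) '' Set.Ici t₀))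
    (hδ0 : 0 < δ) (hδL : δ < L) (hδK : δ * KK + α * L ≤ L)
    (hφ : |φ₀| ≤ δ)
    (P : (ℝ → ℝ) → ℝ → ℝ)
    (hP : ∀ z t, P z t = Real.exp (-∫ u in t₀..t, a u) * φ₀ +
      ∫ s in t₀..t, Real.exp (-∫ u in s..t, a u) * (b s * f (z s)))
    (S : Set (ℝ → ℝ))
    (hS : S = {z : ℝ → ℝ | ContinuousOn z (Set.Ici t₀) ∧ z t₀ = φ₀ ∧
      (∀ t ≥ t₀, |z t| ≤ L) ∧ Filter.Tendsto z Filter.atTop (nhds 0)})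
    (x y : ℝ → ℝ) (hx : x ∈ S) (hy : y ∈ S) :
    sSup ((fun t => |P x t - P y t|) '' Set.Ici t₀) ≤
      α * sSup ((fun t => |x t - y t|) '' Set.Ici t₀) := by
  subst hS
  obtain ⟨hxc, hx0, hxL, -⟩ := hx
  obtain ⟨hyc, hy0, hyL, -⟩ := hy
  set M := sSup ((fun t => |x t - y t|) '' Set.Ici t₀) with hM
  have hbdd : BddAbove ((fun t => |x t - y t|) '' Set.Ici t₀) := by
    refine ⟨2 * L, ?_⟩
    rintro _ ⟨t, ht, rfl⟩
    have := hxL t ht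
    have := hyL t ht
    have h := abs_sub (x t) (y t)
    calc |x t - y t| ≤ |x t| + |y t| := abs_sub _ _
      _ ≤ 2 * L := by linarith
  have hMem : ∀ s ≥ t₀, |x s - y s| ≤ M := fun s hs => le_csSup hbdd ⟨s, hs, rfl⟩
  have hM0 : 0 ≤ M := le_trans (abs_nonneg _) (hMem t₀ le_rfl)
  have hfc : ContinuousOn f (Set.Icc (-L) L) := by
    have hlip : LipschitzOnWith (Real.toNNReal K_L) f (Set.Icc (-L) L) := by
      apply LipschitzOnWith.of_dist_le_mul
      intro u hu v hv
      rw [Real.dist_eq, Real.dist_eq, Real.coe_toNNReal _ hKL.le]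
      exact hflip u v (abs_le.2 ⟨hu.1, hu.2⟩) (abs_le.2 ⟨hv.1, hv.2⟩)
    exact hlip.continuousOn
  have hprim : Continuous fun s => ∫ u in t₀..s, a u :=
    intervalIntegral.continuous_primitive (fun c d => ha.intervalIntegrable c d) t₀
  apply Real.sSup_le _ (by positivity)
  rintro _ ⟨t, ht, rfl⟩
  simp only [Set.mem_Ici] at ht
  have hEc : Continuous fun s => Real.exp (-∫ u in s..t, a u) := by
    have hkey : ∀ s, (∫ u in s..t, a u) = (∫ u in t₀..t, a u) - ∫ u in t₀..s, a u := by
      intro s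
      rw [intervalIntegral.integral_interval_sub_left (ha.intervalIntegrable _ _)
        (ha.intervalIntegrable _ _)]
    have heq : (fun s => Real.exp (-∫ u in s..t, a u)) =
        fun s => Real.exp (-((∫ u in t₀..t, a u) - ∫ u in t₀..s, a u)) :=
      funext fun s => by rw [hkey s]
    rw [heq]
    exact Real.continuous_exp.comp (continuous_const.sub hprim).neg
  have hcfz : ∀ z : ℝ → ℝ, ContinuousOn z (Set.Ici t₀) → (∀ t ≥ t₀, |z t| ≤ L) →
      ContinuousOn (fun s => f (z s)) (Set.uIcc t₀ t) := by
    intro z hzc hzL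
    rw [Set.uIcc_of_le ht]
    apply hfc.comp (hzc.mono Set.Icc_subset_Ici_self)
    intro s hs
    have := hzL s hs.1
    exact Set.mem_Icc.2 (abs_le.1 this)
  have hIx : IntervalIntegrable (fun s => Real.exp (-∫ u in s..t, a u) * (b s * f (x s)))
      MeasureTheory.volume t₀ t :=
    (hEc.continuousOn.mul (hb.continuousOn.mul (hcfz x hxc hxL))).intervalIntegrable
  have hIy : IntervalIntegrable (fun s => Real.exp (-∫ u in s..t, a u) * (b s * f (y s)))
      MeasureTheory.volume t₀ t :=
    (hEc.continuousOn.mul (hb.continuousOn.mul (hcfz y hyc hyL))).intervalIntegrable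
  have hsub : P x t - P y t = (∫ s in t₀..t, Real.exp (-∫ u in s..t, a u) * (b s * f (x s))) -
      ∫ s in t₀..t, Real.exp (-∫ u in s..t, a u) * (b s * f (y s)) := by
    rw [hP, hP]; ring
  show |P x t - P y t| ≤ α * M
  rw [hsub, ← intervalIntegral.integral_sub hIx hIy]
  have hIR : IntervalIntegrable (fun s => Real.exp (-∫ u in s..t, a u) * |b s| * (K_L * M))
      MeasureTheory.volume t₀ t :=
    ((hEc.continuousOn.mul hb.abs.continuousOn).mul continuousOn_const).intervalIntegrable
  have hnonneg : 0 ≤ ∫ s in t₀..t, Real.exp (-∫ u in s..t, a u) * |b s| := by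
    apply intervalIntegral.integral_nonneg ht
    intro s _
    positivity
  calc |∫ s in t₀..t, (Real.exp (-∫ u in s..t, a u) * (b s * f (x s)) -
          Real.exp (-∫ u in s..t, a u) * (b s * f (y s)))|
      ≤ ∫ s in t₀..t, |Real.exp (-∫ u in s..t, a u) * (b s * f (x s)) -
          Real.exp (-∫ u in s..t, a u) * (b s * f (y s))| :=
        intervalIntegral.abs_integral_le_integral_abs ht
    _ ≤ ∫ s in t₀..t, Real.exp (-∫ u in s..t, a u) * |b s| * (K_L * M) := by
        apply intervalIntegral.integral_mono_on ht (hIx.sub hIy).abs hIR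
        intro s hs
        have h1 : Real.exp (-∫ u in s..t, a u) * (b s * f (x s)) -
            Real.exp (-∫ u in s..t, a u) * (b s * f (y s)) =
            Real.exp (-∫ u in s..t, a u) * (b s * (f (x s) - f (y s))) := by ring
        rw [h1, abs_mul, abs_mul, Real.abs_exp, mul_assoc]
        apply mul_le_mul_of_nonneg_left _ (Real.exp_pos _).le
        apply mul_le_mul_of_nonneg_left _ (abs_nonneg _)
        calc |f (x s) - f (y s)| ≤ K_L * |x s - y s| :=
              hflip _ _ (hxL s hs.1) (hyL s hs.1)
          _ ≤ K_L * M := mul_le_mul_of_nonneg_left (hMem s hs.1) hKL.le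
    _ = (∫ s in t₀..t, Real.exp (-∫ u in s..t, a u) * |b s|) * (K_L * M) := by
        rw [← intervalIntegral.integral_mul_const]
    _ ≤ α * M := by nlinarith [hαint t ht]
end

section
/- Under the same hypotheses, the operator P maps S into itself: for x ∈ S, Px is continuous, |(Px)(t)| ≤ δK + αL ≤ L for all t ≥ t₀, and (Px)(t) → 0 as t → ∞. -/
/-!
Write `A t = ∫_{t₀}^t a`. The kernel factors as `exp (-∫_s^t a) = exp (-A t) * exp (A s)`, so
`Px` is `exp (-A t)` times a primitive of a continuous function, hence continuous. Since
`|f u| ≤ K_L |u|` on `[-L, L]`, the integral term is bounded by `K_L L` times the weight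
`∫_{t₀}^t exp (-∫_s^t a) |b s| ds ≤ α / K_L`. For the decay, split the integral at a time `T`
after which `|x|` is small: the part over `[t₀, T]` is a constant damped by `exp (-A t) → 0`,
and the part over `[T, t]` is at most `K_L sup_{s ≥ T} |x s|` times the bounded weight.
-/

open Filter Topology Set Real intervalIntegral

/-- `duhamel a h t₀` solves `y' = -a y + h`, `y t₀ = 0`. -/
noncomputable def duhamel (a h : ℝ → ℝ) (t₀ t : ℝ) : ℝ :=
  ∫ s in t₀..t, exp (-∫ u in s..t, a u) * h s

lemma bddAbove_image_Ici_of_tendsto {g : ℝ → ℝ} (hg : Continuous g) {c : ℝ}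
    (hgc : Tendsto g atTop (𝓝 c)) (t₀ : ℝ) : BddAbove (g '' Ici t₀) := by
  obtain ⟨s, hs, hgs⟩ := Metric.exists_isBounded_image_of_tendsto hgc
  obtain ⟨N, hN⟩ := mem_atTop_sets.1 hs
  have hcover : Ici t₀ ⊆ Icc t₀ N ∪ s := fun t ht =>
    (le_total t N).imp (fun htN => ⟨ht, htN⟩) (hN t)
  refine ((((isCompact_Icc (a := t₀) (b := N)).image hg).isBounded.union hgs).bddAbove).mono ?_
  rw [← image_union]
  exact image_mono hcover

section Kernel

variable {a : ℝ → ℝ} (ha : Continuous a)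
include ha

lemma exp_neg_integral_eq (t₀ s t : ℝ) :
    exp (-∫ u in s..t, a u) = exp (-∫ u in t₀..t, a u) * exp (∫ u in t₀..s, a u) := by
  rw [← integral_interval_sub_left (ha.intervalIntegrable _ _) (ha.intervalIntegrable _ _),
    ← exp_add]
  ring_nf

lemma continuous_exp_neg_integral_left (t₀ t : ℝ) :
    Continuous fun s => exp (-∫ u in s..t, a u) := by
  rw [funext fun s => exp_neg_integral_eq ha t₀ s t]
  exact continuous_const.mul
    (continuous_exp.comp (continuous_primitive (fun _ _ => ha.intervalIntegrable _ _) t₀))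


lemma duhamel_eq_exp_mul (h : ℝ → ℝ) (t₀ t : ℝ) :
    duhamel a h t₀ t =
      exp (-∫ u in t₀..t, a u) * ∫ s in t₀..t, exp (∫ u in t₀..s, a u) * h s := by
  rw [duhamel, ← integral_const_mul]
  refine integral_congr fun s _ => ?_
  rw [exp_neg_integral_eq ha t₀ s t]
  ring

lemma continuous_duhamel {h : ℝ → ℝ} (hh : Continuous h) (t₀ : ℝ) :
    Continuous (duhamel a h t₀) := by
  have hA : Continuous fun t => ∫ u in t₀..t, a u :=
    continuous_primitive (fun _ _ => ha.intervalIntegrable _ _) t₀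
  rw [funext (duhamel_eq_exp_mul ha h t₀)]
  exact (continuous_exp.comp hA.neg).mul (continuous_primitive
    (fun _ _ => ((continuous_exp.comp hA).mul hh).intervalIntegrable _ _) t₀)

lemma duhamel_eq_add {h : ℝ → ℝ} (hh : Continuous h) (t₀ T t : ℝ) :
    duhamel a h t₀ t =
      exp (-∫ u in t₀..t, a u) * (∫ s in t₀..T, exp (∫ u in t₀..s, a u) * h s) +
        ∫ s in T..t, exp (-∫ u in s..t, a u) * h s := by
  have hk : Continuous fun s => exp (-∫ u in s..t, a u) * h s :=
    (continuous_exp_neg_integral_left ha t₀ t).mul hh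
  rw [duhamel, ← integral_add_adjacent_intervals (hk.intervalIntegrable t₀ T)
    (hk.intervalIntegrable T t), ← integral_const_mul]
  congr 1
  refine integral_congr fun s _ => ?_
  rw [exp_neg_integral_eq ha t₀ s t]
  ring

lemma abs_integral_exp_neg_integral_mul_le {b h : ℝ → ℝ} (hb : Continuous b)
    {t₀ T t M : ℝ} (hT : t₀ ≤ T) (hTt : T ≤ t) (hM0 : 0 ≤ M)
    (hM : ∀ s ∈ Icc T t, |h s| ≤ M * |b s|) :
    |∫ s in T..t, exp (-∫ u in s..t, a u) * h s| ≤ M * duhamel a (fun s => |b s|) t₀ t := by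
  have hkb : Continuous fun s => exp (-∫ u in s..t, a u) * |b s| :=
    (continuous_exp_neg_integral_left ha t₀ t).mul hb.abs
  calc |∫ s in T..t, exp (-∫ u in s..t, a u) * h s|
      ≤ ∫ s in T..t, M * (exp (-∫ u in s..t, a u) * |b s|) := by
        rw [← norm_eq_abs]
        refine norm_integral_le_of_norm_le hTt (MeasureTheory.ae_of_all _ fun s hs => ?_)
          ((continuous_const.mul hkb).intervalIntegrable (μ := MeasureTheory.volume) _ _)
        rw [norm_eq_abs, abs_mul, abs_exp, mul_left_comm]
        exact mul_le_mul_of_nonneg_left (hM s (Ioc_subset_Icc_self hs)) (exp_pos _).le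
    _ = M * ∫ s in T..t, exp (-∫ u in s..t, a u) * |b s| := integral_const_mul _ _
    _ ≤ M * duhamel a (fun s => |b s|) t₀ t :=
        mul_le_mul_of_nonneg_left (integral_mono_interval hT hTt le_rfl
          (MeasureTheory.ae_of_all _ fun s => mul_nonneg (exp_pos _).le (abs_nonneg _))
          (hkb.intervalIntegrable _ _)) hM0

end Kernel

theorem tendsto_duhamel_zero {a b h m : ℝ → ℝ} {t₀ W : ℝ} (ha : Continuous a) (hb : Continuous b)
    (hA : Tendsto (fun t => ∫ u in t₀..t, a u) atTop atTop) (hh : Continuous h)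
    (hW : ∀ t ≥ t₀, duhamel a (fun s => |b s|) t₀ t ≤ W)
    (hm : Tendsto m atTop (𝓝 0)) (hhm : ∀ s ≥ t₀, |h s| ≤ m s * |b s|) :
    Tendsto (duhamel a h t₀) atTop (𝓝 0) := by
  have hW0 : 0 ≤ W := by simpa [duhamel] using hW t₀ le_rfl
  rw [Metric.tendsto_nhds]
  intro ε hε
  set η := ε / (2 * (W + 1))
  have hη : 0 < η := by positivity
  have hηW : η * W ≤ ε / 2 := calc
    η * W ≤ η * (W + 1) := by gcongr; linarith
    _ = ε / 2 := by simp only [η]; field_simp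
  obtain ⟨T₁, hT₁⟩ := eventually_atTop.1 (hm.eventually (eventually_le_nhds hη))
  set T := max t₀ T₁
  set C := ∫ s in t₀..T, exp (∫ u in t₀..s, a u) * h s
  have hhead : Tendsto (fun t => exp (-∫ u in t₀..t, a u) * C) atTop (𝓝 0) := by
    simpa using (tendsto_exp_neg_atTop_nhds_zero.comp hA).mul_const C
  filter_upwards [eventually_ge_atTop T, Metric.tendsto_nhds.1 hhead (ε / 2) (half_pos hε)]
    with t hTt hhead_t
  have htail : |∫ s in T..t, exp (-∫ u in s..t, a u) * h s| ≤ η * W := by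
    refine (abs_integral_exp_neg_integral_mul_le ha hb (le_max_left _ _) hTt hη.le
      fun s hs => ?_).trans (mul_le_mul_of_nonneg_left (hW t ((le_max_left _ _).trans hTt)) hη.le)
    exact (hhm s ((le_max_left _ _).trans hs.1)).trans (mul_le_mul_of_nonneg_right
      (hT₁ s ((le_max_right _ _).trans hs.1)) (abs_nonneg _))
  rw [Real.dist_eq, sub_zero] at hhead_t ⊢
  rw [duhamel_eq_add ha hh t₀ T t]
  calc _ ≤ |exp (-∫ u in t₀..t, a u) * C| + |∫ s in T..t, exp (-∫ u in s..t, a u) * h s| :=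
        abs_add_le _ _
    _ < ε / 2 + ε / 2 := add_lt_add_of_lt_of_le hhead_t (htail.trans hηW)
    _ = ε := add_halves ε

theorem stmt_11_general (a b f : ℝ → ℝ) (t₀ L K_L α φ₀ δ KK : ℝ)
    (ha : Continuous a) (hb : Continuous b)
    (hH3 : Filter.Tendsto (fun t => ∫ s in t₀..t, a s) Filter.atTop Filter.atTop)
    (hL : 0 < L) (hKL : 0 < K_L)
    (hf0 : f 0 = 0)
    (hflip : ∀ u v : ℝ, |u| ≤ L → |v| ≤ L → |f u - f v| ≤ K_L * |u - v|)
    (hαint : ∀ t ≥ t₀, K_L * ∫ s in t₀..t, Real.exp (-∫ u in s..t, a u) * |b s| ≤ α)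
    (hKK : KK = sSup ((fun t => Real.exp (-∫ u in t₀..t, a u)) '' Set.Ici t₀))
    (hφ : |φ₀| ≤ δ)
    (P : (ℝ → ℝ) → ℝ → ℝ)
    (hP : ∀ z t, P z t = Real.exp (-∫ u in t₀..t, a u) * φ₀ +
      ∫ s in t₀..t, Real.exp (-∫ u in s..t, a u) * (b s * f (z s)))
    (x : ℝ → ℝ)
    (hxc : ContinuousOn x (Set.Ici t₀))
    (hxL : ∀ t ≥ t₀, |x t| ≤ L) (hx0 : Filter.Tendsto x Filter.atTop (nhds 0)) :
    ContinuousOn (P x) (Set.Ici t₀) ∧ P x t₀ = φ₀ ∧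
    (∀ t ≥ t₀, |P x t| ≤ δ * KK + α * L) ∧
    Filter.Tendsto (P x) Filter.atTop (nhds 0) := by
  have hexp : Tendsto (fun t => exp (-∫ u in t₀..t, a u)) atTop (𝓝 0) :=
    tendsto_exp_neg_atTop_nhds_zero.comp hH3
  have hexp_le : ∀ t ≥ t₀, exp (-∫ u in t₀..t, a u) ≤ KK := fun t ht =>
    hKK ▸ le_csSup (bddAbove_image_Ici_of_tendsto (continuous_exp.comp
      (continuous_primitive (fun _ _ => ha.intervalIntegrable _ _) t₀).neg) hexp t₀) ⟨t, ht, rfl⟩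
  have hW : ∀ t ≥ t₀, duhamel a (fun s => |b s|) t₀ t ≤ α / K_L := fun t ht =>
    (le_div_iff₀' hKL).2 (hαint t ht)
  -- extend `x` to the left of `t₀` so that the forcing term is continuous on all of `ℝ`
  set F : ℝ → ℝ := fun s => b s * f (x (max s t₀))
  have hF : Continuous F := by
    have hfc : ContinuousOn f (Icc (-L) L) :=
      (LipschitzOnWith.of_dist_le' fun u hu v hv => by
        simpa only [Real.dist_eq] using hflip u v (abs_le.2 hu) (abs_le.2 hv)).continuousOn
    exact hb.mul (hfc.comp_continuous (hxc.comp_continuous (continuous_id.max continuous_const)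
      fun t => le_max_right t t₀) fun t => abs_le.1 (hxL _ (le_max_right t t₀)))
  have hF_le : ∀ s ≥ t₀, |F s| ≤ K_L * |x s| * |b s| := fun s hs => by
    have hfx := hflip (x s) 0 (hxL s hs) (by simpa using hL.le)
    rw [hf0, sub_zero, sub_zero] at hfx
    simp only [F, max_eq_left hs, abs_mul]
    nlinarith [abs_nonneg (b s)]
  have hPx : ∀ t ≥ t₀, P x t = exp (-∫ u in t₀..t, a u) * φ₀ + duhamel a F t₀ t := by
    intro t ht
    rw [hP, duhamel]
    congr 1
    refine integral_congr fun s hs => ?_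
    rw [uIcc_of_le ht] at hs
    simp only [F, max_eq_left hs.1]
  refine ⟨?_, by simp [hP], fun t ht => ?_, ?_⟩
  · exact (((continuous_exp.comp (continuous_primitive (fun _ _ => ha.intervalIntegrable _ _)
      t₀).neg).mul continuous_const).add (continuous_duhamel ha hF t₀)).continuousOn.congr hPx
  · rw [hPx t ht]
    have hforce : ∀ s ∈ Icc t₀ t, |F s| ≤ (K_L * L) * |b s| := fun s hs =>
      (hF_le s hs.1).trans (by gcongr; exact hxL s hs.1)
    calc _ ≤ |exp (-∫ u in t₀..t, a u) * φ₀| + |duhamel a F t₀ t| := abs_add_le _ _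
      _ ≤ KK * δ + (K_L * L) * (α / K_L) := by
        gcongr
        · rw [abs_mul, abs_exp]
          exact mul_le_mul_of_nonneg (hexp_le t ht) hφ (exp_pos _).le ((abs_nonneg _).trans hφ)
        · exact (abs_integral_exp_neg_integral_mul_le ha hb le_rfl ht (by positivity) hforce).trans
            (mul_le_mul_of_nonneg_left (hW t ht) (by positivity))
      _ = δ * KK + α * L := by field_simp
  · have hm : Tendsto (fun s => K_L * |x s|) atTop (𝓝 0) := by
      simpa using (hx0.abs.const_mul K_L)
    have hlim := (hexp.mul_const φ₀).add (tendsto_duhamel_zero ha hb hH3 hF hW hm hF_le)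
    rw [zero_mul, zero_add] at hlim
    exact hlim.congr' ((eventually_ge_atTop t₀).mono fun t ht => (hPx t ht).symm)

/-- The operator P maps S into itself. -/
theorem stmt_11 (a b f : ℝ → ℝ) (t₀ L K_L α φ₀ δ KK : ℝ)
    (ha : Continuous a) (hb : Continuous b)
    (hH3 : Filter.Tendsto (fun t => ∫ s in t₀..t, a s) Filter.atTop Filter.atTop)
    (hL : 0 < L) (hKL : 0 < K_L)
    (hf0 : f 0 = 0)
    (hflip : ∀ u v : ℝ, |u| ≤ L → |v| ≤ L → |f u - f v| ≤ K_L * |u - v|)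
    (hα0 : 0 < α) (hα1 : α < 1)
    (hαint : ∀ t ≥ t₀, K_L * ∫ s in t₀..t, Real.exp (-∫ u in s..t, a u) * |b s| ≤ α)
    (hKK : KK = sSup ((fun t => Real.exp (-∫ u in t₀..t, a u)) '' Set.Ici t₀))
    (hδ0 : 0 < δ) (hδL : δ < L) (hδK : δ * KK + α * L ≤ L)
    (hφ : |φ₀| ≤ δ)
    (P : (ℝ → ℝ) → ℝ → ℝ)
    (hP : ∀ z t, P z t = Real.exp (-∫ u in t₀..t, a u) * φ₀ +
      ∫ s in t₀..t, Real.exp (-∫ u in s..t, a u) * (b s * f (z s)))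
    (x : ℝ → ℝ)
    (hxc : ContinuousOn x (Set.Ici t₀)) (hxφ : x t₀ = φ₀)
    (hxL : ∀ t ≥ t₀, |x t| ≤ L) (hx0 : Filter.Tendsto x Filter.atTop (nhds 0)) :
    ContinuousOn (P x) (Set.Ici t₀) ∧ P x t₀ = φ₀ ∧
    (∀ t ≥ t₀, |P x t| ≤ δ * KK + α * L) ∧
    Filter.Tendsto (P x) Filter.atTop (nhds 0) :=
  stmt_11_general a b f t₀ L K_L α φ₀ δ KK ha hb hH3 hL hKL hf0 hflip hαint hKK hφ P hP x hxc hxL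
    hx0
end

section
/- Stability part of Theorem 3.1 (scalar case): assume |f(u)-f(v)| ≤ K_L|u-v| for |u|,|v| ≤ L, f(0)=0, and K_L ∫_{t₀}^t exp(-∫_s^t a(u)du)|b(s)|ds ≤ α < 1 for all t ≥ t₀. Let K = sup_{t ≥ t₀} exp(-∫_{t₀}^t a). Given 0 < ε < L, choose δ > 0 with δ < ε and Kδ + αε < ε. Then any continuous x on [t₀,∞) satisfying x(t) = e^{-∫_{t₀}^t a} x(t₀) + ∫_{t₀}^t e^{-∫_s^t a} b(s) f(x(s)) ds with |x(t₀)| ≤ δ satisfies |x(t)| < ε for all t ≥ t₀. -/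
open Set intervalIntegral MeasureTheory Filter
open scoped Topology

/-- Stability: small initial data give solutions staying below ε. -/
theorem stmt_12 (a b f x : ℝ → ℝ) (t₀ L K_L α ε δ KK : ℝ)
    (ha : ContinuousOn a (Set.Ici t₀)) (hb : ContinuousOn b (Set.Ici t₀))
    (hL : 0 < L) (hKL : 0 < K_L)
    (hf : Continuous f) (hf0 : f 0 = 0)
    (hflip : ∀ u v : ℝ, |u| ≤ L → |v| ≤ L → |f u - f v| ≤ K_L * |u - v|)
    (hα0 : 0 < α) (hα1 : α < 1)
    (hαint : ∀ t ≥ t₀, K_L * ∫ s in t₀..t, Real.exp (-∫ u in s..t, a u) * |b s| ≤ α)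
    (hbdd : BddAbove ((fun t => Real.exp (-∫ u in t₀..t, a u)) '' Set.Ici t₀))
    (hKK : KK = sSup ((fun t => Real.exp (-∫ u in t₀..t, a u)) '' Set.Ici t₀))
    (hε0 : 0 < ε) (hεL : ε < L)
    (hδ0 : 0 < δ) (hδε : δ < ε) (hδK : KK * δ + α * ε < ε)
    (hxc : ContinuousOn x (Set.Ici t₀))
    (hxeq : ∀ t ≥ t₀, x t = Real.exp (-∫ u in t₀..t, a u) * x t₀ +
      ∫ s in t₀..t, Real.exp (-∫ u in s..t, a u) * (b s * f (x s)))
    (hx0 : |x t₀| ≤ δ) :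
    ∀ t ≥ t₀, |x t| < ε := by
  by_contra h
  push_neg at h
  obtain ⟨t₁, ht₁0, ht₁⟩ := h
  -- the set of bad times in [t₀, t₁]
  set S : Set ℝ := {t ∈ Set.Icc t₀ t₁ | ε ≤ |x t|} with hS
  have hSne : S.Nonempty := ⟨t₁, ⟨ht₁0, le_rfl⟩, ht₁⟩
  have hSbdd : BddBelow S := ⟨t₀, fun t ht => ht.1.1⟩
  have hSclosed : IsClosed S := by
    have hxcont : ContinuousOn (fun t => |x t|) (Set.Icc t₀ t₁) :=
      (hxc.mono Set.Icc_subset_Ici_self).abs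
    have : S = Set.Icc t₀ t₁ ∩ (fun t => |x t|) ⁻¹' Set.Ici ε := by
      ext t; simp [hS, Set.mem_sep_iff, and_comm]
    rw [this]
    exact hxcont.preimage_isClosed_of_isClosed isClosed_Icc isClosed_Ici
  set T := sInf S with hT
  have hTS : T ∈ S := hSclosed.csInf_mem hSne hSbdd
  have hT0 : t₀ ≤ T := hTS.1.1
  have hTbig : ε ≤ |x T| := hTS.2
  -- t₀ < T
  have hT0lt : t₀ < T := by
    rcases lt_or_eq_of_le hT0 with h' | h'
    · exact h'
    · exfalso; rw [← h'] at hTbig; linarith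
  -- |x s| ≤ ε for s ∈ Ico t₀ T
  have hsmall : ∀ s ∈ Set.Ico t₀ T, |x s| ≤ ε := by
    intro s hs
    by_contra hcon
    push_neg at hcon
    have hsS : s ∈ S := ⟨⟨hs.1, hs.2.le.trans hTS.1.2⟩, hcon.le⟩
    exact absurd (csInf_le hSbdd hsS) (not_le.mpr hs.2)
  -- |x T| ≤ ε by continuity
  have hTle : |x T| ≤ ε := by
    have hne : (𝓝[Set.Ioo t₀ T] T).NeBot := by
      rw [nhdsWithin_Ioo_eq_nhdsLT hT0lt]
      exact nhdsLT_neBot T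
    have htend : Filter.Tendsto (fun s => |x s|) (𝓝[Set.Ioo t₀ T] T) (𝓝 |x T|) := by
      have : ContinuousWithinAt (fun s => |x s|) (Set.Ici t₀) T :=
        (hxc.abs) T (Set.mem_Ici.mpr hT0)
      exact this.mono (fun s hs => le_of_lt hs.1)
    refine le_of_tendsto htend ?_
    filter_upwards [self_mem_nhdsWithin] with s hs
    exact hsmall s ⟨hs.1.le, hs.2⟩
  have hTeqε : |x T| = ε := le_antisymm hTle hTbig
  have hsmall' : ∀ s ∈ Set.Icc t₀ T, |x s| ≤ ε := by
    intro s hs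
    rcases lt_or_eq_of_le hs.2 with h' | h'
    · exact hsmall s ⟨hs.1, h'⟩
    · rw [h']; exact hTle
  -- integrability facts on [t₀, T]
  have hsub : Set.uIcc t₀ T ⊆ Set.Ici t₀ := by
    rw [Set.uIcc_of_le hT0]
    exact Set.Icc_subset_Ici_self
  have haint : IntegrableOn a (Set.uIcc t₀ T) :=
    (ha.mono hsub).integrableOn_compact isCompact_uIcc
  have hexpcont : ContinuousOn (fun s => Real.exp (-∫ u in s..T, a u)) (Set.uIcc t₀ T) := by
    have h1 : ContinuousOn (fun s => ∫ u in s..T, a u) (Set.uIcc t₀ T) :=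
      intervalIntegral.continuousOn_primitive_interval_left haint
    exact Real.continuous_exp.comp_continuousOn h1.neg
  have hbc : ContinuousOn b (Set.uIcc t₀ T) := hb.mono hsub
  have hxcI : ContinuousOn x (Set.uIcc t₀ T) := hxc.mono hsub
  have hg1cont : ContinuousOn (fun s => Real.exp (-∫ u in s..T, a u) * (b s * f (x s)))
      (Set.uIcc t₀ T) := hexpcont.mul (hbc.mul (hf.comp_continuousOn hxcI))
  have hg1int : IntervalIntegrable (fun s => Real.exp (-∫ u in s..T, a u) * (b s * f (x s)))
      volume t₀ T := hg1cont.intervalIntegrable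
  have hg2int : IntervalIntegrable (fun s => Real.exp (-∫ u in s..T, a u) * |b s|)
      volume t₀ T := (hexpcont.mul hbc.abs).intervalIntegrable
  have hg2int' : IntervalIntegrable
      (fun s => Real.exp (-∫ u in s..T, a u) * |b s| * (K_L * ε)) volume t₀ T :=
    hg2int.mul_const _
  -- pointwise bound of |f (x s)|
  have hfbound : ∀ s ∈ Set.Icc t₀ T, |f (x s)| ≤ K_L * |x s| := by
    intro s hs
    have hxs : |x s| ≤ L := (hsmall' s hs).trans hεL.le
    have := hflip (x s) 0 hxs (by simp [hL.le])
    simpa [hf0] using this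
  -- the main estimate
  have hxT := hxeq T hT0
  have habs1 : |∫ s in t₀..T, Real.exp (-∫ u in s..T, a u) * (b s * f (x s))|
      ≤ ∫ s in t₀..T, |Real.exp (-∫ u in s..T, a u) * (b s * f (x s))| :=
    intervalIntegral.abs_integral_le_integral_abs hT0
  have habs2 : (∫ s in t₀..T, |Real.exp (-∫ u in s..T, a u) * (b s * f (x s))|)
      ≤ ∫ s in t₀..T, Real.exp (-∫ u in s..T, a u) * |b s| * (K_L * ε) := by
    apply intervalIntegral.integral_mono_on hT0 hg1int.abs hg2int'
    intro s hs
    have h1 : |Real.exp (-∫ u in s..T, a u) * (b s * f (x s))|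
        = Real.exp (-∫ u in s..T, a u) * (|b s| * |f (x s)|) := by
      rw [abs_mul, abs_mul, abs_of_pos (Real.exp_pos _)]
    rw [h1]
    have hfx : |f (x s)| ≤ K_L * ε := by
      refine (hfbound s hs).trans ?_
      exact mul_le_mul_of_nonneg_left (hsmall' s hs) hKL.le
    have h2 : |b s| * |f (x s)| ≤ |b s| * (K_L * ε) :=
      mul_le_mul_of_nonneg_left hfx (abs_nonneg _)
    calc Real.exp (-∫ u in s..T, a u) * (|b s| * |f (x s)|)
        ≤ Real.exp (-∫ u in s..T, a u) * (|b s| * (K_L * ε)) :=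
          mul_le_mul_of_nonneg_left h2 (Real.exp_pos _).le
      _ = Real.exp (-∫ u in s..T, a u) * |b s| * (K_L * ε) := by ring
  have habs3 : (∫ s in t₀..T, Real.exp (-∫ u in s..T, a u) * |b s| * (K_L * ε)) ≤ α * ε := by
    rw [intervalIntegral.integral_mul_const]
    have h1 := hαint T hT0
    have : (∫ s in t₀..T, Real.exp (-∫ u in s..T, a u) * |b s|) * (K_L * ε)
        = (K_L * ∫ s in t₀..T, Real.exp (-∫ u in s..T, a u) * |b s|) * ε := by ring
    rw [this]
    exact mul_le_mul_of_nonneg_right h1 hε0.le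
  have hKKbound : Real.exp (-∫ u in t₀..T, a u) ≤ KK := by
    rw [hKK]
    exact le_csSup hbdd ⟨T, Set.mem_Ici.mpr hT0, rfl⟩
  have hfirst : Real.exp (-∫ u in t₀..T, a u) * |x t₀| ≤ KK * δ :=
    mul_le_mul hKKbound hx0 (abs_nonneg _) ((Real.exp_pos _).le.trans hKKbound)
  have : |x T| ≤ KK * δ + α * ε := by
    rw [hxT]
    calc |Real.exp (-∫ u in t₀..T, a u) * x t₀ +
          ∫ s in t₀..T, Real.exp (-∫ u in s..T, a u) * (b s * f (x s))|
        ≤ |Real.exp (-∫ u in t₀..T, a u) * x t₀| +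
          |∫ s in t₀..T, Real.exp (-∫ u in s..T, a u) * (b s * f (x s))| := abs_add_le _ _
      _ ≤ Real.exp (-∫ u in t₀..T, a u) * |x t₀| + α * ε := by
          rw [abs_mul, abs_of_pos (Real.exp_pos _)]
          exact add_le_add le_rfl (habs1.trans (habs2.trans habs3))
      _ ≤ KK * δ + α * ε := add_le_add hfirst le_rfl
  linarith [hTeqε ▸ this]
end

section
/- Let a be continuous nonnegative ω-periodic with ā > 0, σ = exp(-āω), G(t,s) = exp(∫_t^s a)/(σ⁻¹−1), b continuous nonnegative ω-periodic with b̄ > 0, and let x be continuous ω-periodic with x(t) ≥ σ sup_{[0,ω]}|x| ≥ 0 on [0,ω] and sup-norm ‖x‖. If f(x(t)) ≥ η x(t) for all t ∈ [0,ω] with η > 0 and f ≥ 0 continuous, then for (Tx)(t) = λ∫_t^{t+ω} G(t,s) b(s) f(x(s−τ(s))) ds with λ > 0 and τ continuous ω-periodic, one has sup_{t∈[0,ω]} (Tx)(t) ≥ λ σ η · (b̄ω/(σ⁻¹−1)) · ‖x‖. -/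
/-- Scalar version of the lower estimate for the operator T (Lemma 6.4). -/
theorem stmt_19 (a b τ f x : ℝ → ℝ) (ω abar bbar σ η lam : ℝ) (T : ℝ → ℝ)
    (hω : 0 < ω)
    (ha : Continuous a) (hann : ∀ t, 0 ≤ a t) (haper : Function.Periodic a ω)
    (hb : Continuous b) (hbnn : ∀ t, 0 ≤ b t) (hbper : Function.Periodic b ω)
    (hτ : Continuous τ) (hτper : Function.Periodic τ ω)
    (habar : abar = (1 / ω) * ∫ s in (0:ℝ)..ω, a s) (habar_pos : 0 < abar)
    (hbbar : bbar = (1 / ω) * ∫ s in (0:ℝ)..ω, b s) (hbbar_pos : 0 < bbar)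
    (hσ : σ = Real.exp (-abar * ω))
    (hx : Continuous x) (hxper : Function.Periodic x ω)
    (hxcone : ∀ t ∈ Set.Icc (0:ℝ) ω,
      σ * sSup ((fun u => |x u|) '' Set.Icc (0:ℝ) ω) ≤ x t)
    (hf : Continuous f) (hfnn : ∀ u, 0 ≤ f u)
    (hη : 0 < η) (hfx : ∀ t ∈ Set.Icc (0:ℝ) ω, η * x t ≤ f (x t))
    (hlam : 0 < lam)
    (hT : ∀ t, T t = lam * ∫ s in t..t + ω,
      (Real.exp (∫ θ in t..s, a θ) / (σ⁻¹ - 1)) * (b s * f (x (s - τ s)))) :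
    lam * σ * η * (bbar * ω / (σ⁻¹ - 1)) *
        sSup ((fun u => |x u|) '' Set.Icc (0:ℝ) ω) ≤
      sSup (T '' Set.Icc (0:ℝ) ω) := by
  set M := sSup ((fun u => |x u|) '' Set.Icc (0:ℝ) ω) with hM
  have hσ0 : 0 < σ := hσ ▸ Real.exp_pos _
  have hσ1 : σ < 1 := by
    rw [hσ, ← Real.exp_zero]
    apply Real.exp_lt_exp.2
    nlinarith
  have hc : 0 < σ⁻¹ - 1 := by
    have := one_lt_inv₀ hσ0 |>.2 hσ1
    linarith
  have hM0 : 0 ≤ M := by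
    have h0 : |x 0| ∈ (fun u => |x u|) '' Set.Icc (0:ℝ) ω :=
      ⟨0, ⟨le_refl _, hω.le⟩, rfl⟩
    have hbdd : BddAbove ((fun u => |x u|) '' Set.Icc (0:ℝ) ω) :=
      (isCompact_Icc.image (continuous_abs.comp hx)).bddAbove
    exact le_trans (abs_nonneg _) (le_csSup hbdd h0)
  -- reduce any point to the fundamental period
  have hred : ∀ u : ℝ, η * (σ * M) ≤ f (x u) := by
    intro u
    set r : ℝ := u - ⌊u / ω⌋ * ω with hr
    have hr0 : 0 ≤ r := Int.sub_floor_div_mul_nonneg u hω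
    have hrω : r < ω := Int.sub_floor_div_mul_lt u hω
    have hxr : x r = x u := hxper.sub_int_mul_eq _
    have hrmem : r ∈ Set.Icc (0:ℝ) ω := ⟨hr0, hrω.le⟩
    calc η * (σ * M) ≤ η * x r := by
          have := hxcone r hrmem
          nlinarith
      _ ≤ f (x r) := hfx r hrmem
      _ = f (x u) := by rw [hxr]
  -- integrability / continuity of the integrand at t = 0
  have hA : Continuous fun s => ∫ θ in (0:ℝ)..s, a θ :=
    intervalIntegral.continuous_primitive (fun _ _ => ha.intervalIntegrable _ _) 0
  have hg : Continuous fun s => b s * f (x (s - τ s)) :=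
    hb.mul (hf.comp (hx.comp (continuous_id.sub hτ)))
  have hint2 : Continuous fun s =>
      (Real.exp (∫ θ in (0:ℝ)..s, a θ) / (σ⁻¹ - 1)) * (b s * f (x (s - τ s))) :=
    ((Real.continuous_exp.comp hA).div_const _).mul hg
  -- pointwise lower bound
  have hptwise : ∀ s ∈ Set.Icc (0:ℝ) ω,
      (η * (σ * M) / (σ⁻¹ - 1)) * b s ≤
      (Real.exp (∫ θ in (0:ℝ)..s, a θ) / (σ⁻¹ - 1)) * (b s * f (x (s - τ s))) := by
    intro s hs
    have hA0 : 0 ≤ ∫ θ in (0:ℝ)..s, a θ :=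
      intervalIntegral.integral_nonneg hs.1 (fun u _ => hann u)
    have hE : 1 ≤ Real.exp (∫ θ in (0:ℝ)..s, a θ) := Real.one_le_exp hA0
    have hfs := hred (s - τ s)
    have hbn := hbnn s
    have hK : 0 ≤ η * (σ * M) := by positivity
    rw [div_mul_eq_mul_div, div_mul_eq_mul_div, div_le_div_iff_of_pos_right hc]
    nlinarith [mul_le_mul_of_nonneg_left hfs hbn,
      mul_le_mul_of_nonneg_right hE (mul_nonneg hbn (hfnn (x (s - τ s))))]
  have hIle : (η * (σ * M) / (σ⁻¹ - 1)) * (bbar * ω) ≤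
      ∫ s in (0:ℝ)..ω,
        (Real.exp (∫ θ in (0:ℝ)..s, a θ) / (σ⁻¹ - 1)) * (b s * f (x (s - τ s))) := by
    have hbint : (∫ s in (0:ℝ)..ω, b s) = bbar * ω := by
      rw [hbbar]; field_simp
    calc (η * (σ * M) / (σ⁻¹ - 1)) * (bbar * ω)
        = ∫ s in (0:ℝ)..ω, (η * (σ * M) / (σ⁻¹ - 1)) * b s := by
          rw [intervalIntegral.integral_const_mul, hbint]
      _ ≤ _ := intervalIntegral.integral_mono_on hω.le
          ((hb.intervalIntegrable _ _).const_mul _)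
          (hint2.intervalIntegrable _ _) hptwise
  have hT0 : lam * σ * η * (bbar * ω / (σ⁻¹ - 1)) * M ≤ T 0 := by
    rw [hT 0, zero_add]
    have : lam * σ * η * (bbar * ω / (σ⁻¹ - 1)) * M
        = lam * ((η * (σ * M) / (σ⁻¹ - 1)) * (bbar * ω)) := by ring
    rw [this]
    exact mul_le_mul_of_nonneg_left hIle hlam.le
  -- T is continuous, hence bounded above on the compact interval
  have hTcont : Continuous T := by
    have hAdd : ∀ t s : ℝ,
        (∫ θ in t..s, a θ) = (∫ θ in (0:ℝ)..s, a θ) - ∫ θ in (0:ℝ)..t, a θ := by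
      intro t s
      rw [intervalIntegral.integral_interval_sub_left (ha.intervalIntegrable _ _)
        (ha.intervalIntegrable _ _)]
    have hEg : Continuous fun s =>
        Real.exp (∫ θ in (0:ℝ)..s, a θ) * (b s * f (x (s - τ s))) :=
      (Real.continuous_exp.comp hA).mul hg
    have hHc : Continuous fun u => ∫ s in (0:ℝ)..u,
        Real.exp (∫ θ in (0:ℝ)..s, a θ) * (b s * f (x (s - τ s))) :=
      intervalIntegral.continuous_primitive
        (fun _ _ => hEg.intervalIntegrable _ _) 0
    have hTeq : T = fun t => lam * ((Real.exp (-(∫ θ in (0:ℝ)..t, a θ)) / (σ⁻¹ - 1)) *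
        ((∫ s in (0:ℝ)..t + ω,
          Real.exp (∫ θ in (0:ℝ)..s, a θ) * (b s * f (x (s - τ s)))) -
         ∫ s in (0:ℝ)..t,
          Real.exp (∫ θ in (0:ℝ)..s, a θ) * (b s * f (x (s - τ s))))) := by
      funext t
      rw [hT t]
      congr 1
      have hdiff : ((∫ s in (0:ℝ)..t + ω,
            Real.exp (∫ θ in (0:ℝ)..s, a θ) * (b s * f (x (s - τ s)))) -
          ∫ s in (0:ℝ)..t,
            Real.exp (∫ θ in (0:ℝ)..s, a θ) * (b s * f (x (s - τ s)))) =
          ∫ s in t..t + ω,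
            Real.exp (∫ θ in (0:ℝ)..s, a θ) * (b s * f (x (s - τ s))) :=
        intervalIntegral.integral_interval_sub_left
          (hEg.intervalIntegrable _ _) (hEg.intervalIntegrable _ _)
      rw [hdiff, ← intervalIntegral.integral_const_mul]
      apply intervalIntegral.integral_congr
      intro s _
      beta_reduce
      rw [hAdd t s, Real.exp_sub, Real.exp_neg]
      ring
    rw [hTeq]
    exact continuous_const.mul
      ((((Real.continuous_exp.comp hA.neg).div_const _)).mul
        ((hHc.comp (continuous_id.add continuous_const)).sub hHc))
  have hbddT : BddAbove (T '' Set.Icc (0:ℝ) ω) :=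
    (isCompact_Icc.image hTcont).bddAbove
  exact le_trans hT0 (le_csSup hbddT ⟨0, ⟨le_refl _, hω.le⟩, rfl⟩)
end
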